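/- arXiv:2010.11011 — 2 statements merged into one kernel-verified Lean document; each statement's English description precedes it below -/
import Mathlib

section
/- Let g ≥ 2 and s ≥ 1 be integers, and let g_C ≥ 0 be an integer with 2g_C−2+s > 0. Suppose that real numbers ω², χ > 0 and r ≥ 0 satisfy (4(g−1)/g)·χ ≤ (2g−2)(2g_C−2+s) + 3r/n² − (2g−2)s/n for every integer n ≥ 2. Then 2χ < g(2g_C−2+s). -/
theorem stmt_9 (g s : ℕ) (hg : 2 ≤ g) (hs : 1 ≤ s) (gC : ℕ)
    (hbase : 0 < 2 * (gC : ℝ) - 2 + s) (ω2 χ r : ℝ) (hω2 : 0 < ω2) (hχ : 0 < χ) (hr : 0 ≤ r)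
    (hineq : ∀ n : ℕ, 2 ≤ n →
      (4 * ((g : ℝ) - 1) / g) * χ ≤
        (2 * (g : ℝ) - 2) * (2 * (gC : ℝ) - 2 + s) + 3 * r / n ^ 2 - (2 * (g : ℝ) - 2) * s / n) :
    2 * χ < (g : ℝ) * (2 * (gC : ℝ) - 2 + s) := by
  have hg' : (2 : ℝ) ≤ g := by exact_mod_cast hg
  have hs' : (1 : ℝ) ≤ s := by exact_mod_cast hs
  have hc : 0 < (2 * (g : ℝ) - 2) * s := by nlinarith
  obtain ⟨n, hn⟩ := exists_nat_gt (max 2 (3 * r / ((2 * (g : ℝ) - 2) * s)))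
  have h2n : (2 : ℝ) < n := lt_of_le_of_lt (le_max_left _ _) hn
  have hn2 : 2 ≤ n := by exact_mod_cast h2n.le
  have hnpos : (0 : ℝ) < n := by linarith
  have hrn : 3 * r < (2 * (g : ℝ) - 2) * s * n := by
    have := lt_of_le_of_lt (le_max_right 2 (3 * r / ((2 * (g : ℝ) - 2) * s))) hn
    calc 3 * r = 3 * r / ((2 * (g : ℝ) - 2) * s) * ((2 * (g : ℝ) - 2) * s) := by
          rw [div_mul_cancel₀ _ (ne_of_gt hc)]
      _ < n * ((2 * (g : ℝ) - 2) * s) := by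
          exact mul_lt_mul_of_pos_right this hc
      _ = (2 * (g : ℝ) - 2) * s * n := by ring
  have hcorr : 3 * r / (n : ℝ) ^ 2 - (2 * (g : ℝ) - 2) * s / n < 0 := by
    rw [div_sub_div _ _ (by positivity) (ne_of_gt hnpos)]
    apply div_neg_of_neg_of_pos
    · nlinarith
    · positivity
  have h := hineq n hn2
  have hA : 4 * ((g : ℝ) - 1) / g * χ < (2 * (g : ℝ) - 2) * (2 * (gC : ℝ) - 2 + s) := by
    linarith
  have hgpos : (0 : ℝ) < g := by linarith
  have hA' : 4 * ((g : ℝ) - 1) * χ < g * ((2 * (g : ℝ) - 2) * (2 * (gC : ℝ) - 2 + s)) := by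
    have := mul_lt_mul_of_pos_left hA hgpos
    calc 4 * ((g : ℝ) - 1) * χ = g * (4 * ((g : ℝ) - 1) / g * χ) := by field_simp
      _ < _ := this
  nlinarith [mul_pos hχ (sub_pos.mpr (show (1:ℝ) < g by linarith))]
end

section
/- Let g ≥ 2 be an integer, d ≥ 1, n ≥ 2 integers, and g_C ≥ 0, s ≥ 1 integers. If 2g_{C̃} − 2 = d·n·(2g_C − 2 + ((n−1)/n)·s), ω̃² = d·n·ω², r̃ = (d/n)·r, and the inequality ω̃² ≤ 3r̃ + (2g_{C̃} − 2)(2g − 2) holds, then ω² ≤ (2g−2)(2g_C − 2 + s) + 3r/n² − (2g−2)s/n. -/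
-- `K = 2g - 2` and `e = 2 g_C - 2`: the right-hand side of Miyaoka's inequality on the pullback
-- is `d n` times the claimed bound for the original fibration.
lemma miyaoka_bound_base_change (d n K e s r : ℝ) (hn : n ≠ 0) :
    3 * (d / n * r) + d * n * (e + (n - 1) / n * s) * K
      = d * n * (K * (e + s) + 3 * r / n ^ 2 - K * s / n) := by
  field_simp
  ring

theorem stmt_16_general (g d n : ℕ) (hd : 1 ≤ d) (hn : 2 ≤ n)
    (gC s : ℕ) (tC ω2t rt ω2 r : ℝ)
    (htC : tC = (d : ℝ) * n * (2 * (gC : ℝ) - 2 + ((n : ℝ) - 1) / n * s))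
    (hω2t : ω2t = (d : ℝ) * n * ω2)
    (hrt : rt = ((d : ℝ) / n) * r)
    (hMiyaoka : ω2t ≤ 3 * rt + tC * (2 * (g : ℝ) - 2)) :
    ω2 ≤ (2 * (g : ℝ) - 2) * (2 * (gC : ℝ) - 2 + s) + 3 * r / n ^ 2 - (2 * (g : ℝ) - 2) * s / n := by
  have hn0 : (0 : ℝ) < n := by exact_mod_cast (by omega : 0 < n)
  have hdn : (0 : ℝ) < d * n := mul_pos (by exact_mod_cast hd) hn0
  rw [hω2t, hrt, htC, miyaoka_bound_base_change _ _ _ _ _ _ hn0.ne'] at hMiyaoka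
  exact le_of_mul_le_mul_left hMiyaoka hdn

theorem stmt_16 (g d n : ℕ) (hg : 2 ≤ g) (hd : 1 ≤ d) (hn : 2 ≤ n)
    (gC s : ℕ) (hs : 1 ≤ s) (tC ω2t rt ω2 r : ℝ)
    (htC : tC = (d : ℝ) * n * (2 * (gC : ℝ) - 2 + ((n : ℝ) - 1) / n * s))
    (hω2t : ω2t = (d : ℝ) * n * ω2)
    (hrt : rt = ((d : ℝ) / n) * r)
    (hMiyaoka : ω2t ≤ 3 * rt + tC * (2 * (g : ℝ) - 2)) :
    ω2 ≤ (2 * (g : ℝ) - 2) * (2 * (gC : ℝ) - 2 + s) + 3 * r / n ^ 2 - (2 * (g : ℝ) - 2) * s / n :=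
  stmt_16_general g d n hd hn gC s tC ω2t rt ω2 r htC hω2t hrt hMiyaoka
end
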